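/- arXiv:1910.03531 — 2 statements merged into one kernel-verified Lean document; each statement's English description precedes it below -/
import Mathlib

section
/- Assume (A1) and (A2), and fix t ∈ {0,1}. Let τ†₁ : 𝒳 → ℝ be an arbitrary bounded measurable function, let π† : 𝒳 → [ε, 1−ε] be measurable and τ†₀ : 𝒳 → ℝ be bounded measurable, and suppose that either (i) π†(X) = π_t(0,X) almost surely, or (ii) τ†₀(X) = τ_t(0,X) almost surely. Define π̃(R,X) = R·π_{t1} + (1−R)·π†(X) and τ̃(R,X) = R·τ†₁(X) + (1−R)·τ†₀(X). Then the influence-function expression evaluated at these (possibly misspecified) nuisances remains unbiased: E[ 1{T=t}·Y / π̃(R,X) + (1 − 1{T=t} / π̃(R,X))·τ̃(R,X) ] = μ_t. -/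
open MeasureTheory ProbabilityTheory Set

noncomputable section

/-- The σ-algebra on `Ω` generated by the map `X`. -/
def sigmaX {Ω 𝒳 : Type*} [MeasurableSpace 𝒳] (X : Ω → 𝒳) : MeasurableSpace Ω :=
  MeasurableSpace.comap X inferInstance

/-- Conditional expectation of `f` given the σ-algebra `m'` under the measure `μ`. -/
def cexp {Ω : Type*} (m' : MeasurableSpace Ω) {m0 : MeasurableSpace Ω} (μ : Measure Ω)
    (f : Ω → ℝ) : Ω → ℝ :=
  MeasureTheory.condExp m' μ f

/-- Conditional probability of the event `s` given the σ-algebra `m'`, as a function. -/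
def cprob {Ω : Type*} (m' : MeasurableSpace Ω) {m0 : MeasurableSpace Ω} (μ : Measure Ω)
    (s : Set Ω) : Ω → ℝ :=
  cexp m' μ (s.indicator fun _ => (1 : ℝ))

/-- `f` and `g` are conditionally independent given the σ-algebra `m'` under `μ` :
conditional probabilities of joint events factorize. -/
def CondIndepFunGiven {Ω β γ : Type*} [MeasurableSpace β]
    [MeasurableSpace γ] (m' : MeasurableSpace Ω) {m0 : MeasurableSpace Ω}
    (f : Ω → β) (g : Ω → γ) (μ : Measure Ω) : Prop :=
  ∀ s u, MeasurableSet s → MeasurableSet u →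
    cprob m' μ (f ⁻¹' s ∩ g ⁻¹' u)
      =ᵐ[μ] fun ω => cprob m' μ (f ⁻¹' s) ω * cprob m' μ (g ⁻¹' u) ω

/-!
Write the score as `τ̃ + 1{T = t} (Y_t - τ̃) / π̃` and split the expectation according to `R`.
In the trial arm `π̃ = P(T = t | R = 1)` is the true propensity and, by (A1), `T` is independent
of `Y_t - τ†₁(X)`, so the correction term has mean `E[Y_t - τ†₁(X) | R = 1]`. In the
observational arm, conditioning on `X` and using (A2) turns the correction term into
`π_t(0, X) / π†(X) · (τ_t(0, X) - τ†₀(X))`, which is `τ_t(0, X) - τ†₀(X)` under (i) and `0` under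
(ii). So in each arm the score has the same mean as `Y_t`.

(A2) is used through `E[1{T = t} f(Y₁, Y₀) | X] = π_t(0, X) · E[f(Y₁, Y₀) | X]`. This follows
from the factorisation for indicators: on every `σ(X)`-measurable set `S`, the measures
`1_{S ∩ {T = t}} · P` and `π_t(0, X) · 1_S · P` push forward to the same law of `(Y₁, Y₀)`.
-/

section Cprob

variable {Ω : Type*} {m m0 : MeasurableSpace Ω} {μ : Measure Ω} {A S : Set Ω}

lemma ae_norm_cprob_le_one : ∀ᵐ ω ∂μ, ‖cprob m μ A ω‖ ≤ 1 :=
  ae_bdd_abs_condExp_of_ae_bdd_abs (ae_of_all _ fun ω => by by_cases h : ω ∈ A <;> simp [h])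

lemma cprob_nonneg : 0 ≤ᵐ[μ] cprob m μ A :=
  condExp_nonneg (ae_of_all _ (indicator_nonneg fun _ _ => zero_le_one))

lemma stronglyMeasurable_cprob : StronglyMeasurable[m] (cprob m μ A) :=
  stronglyMeasurable_condExp

lemma setIntegral_cprob [IsFiniteMeasure μ] (hm : m ≤ m0) (hA : MeasurableSet A)
    (hS : MeasurableSet[m] S) : ∫ ω in S, cprob m μ A ω ∂μ = μ.real (S ∩ A) := by
  rw [cprob, cexp, setIntegral_condExp hm ((integrable_const 1).indicator hA) hS,
    setIntegral_indicator hA]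
  simp

lemma le_measureReal_of_ae_le_cprob [IsProbabilityMeasure μ] {ε : ℝ} (hm : m ≤ m0)
    (hA : MeasurableSet A) (h : ∀ᵐ ω ∂μ, ε ≤ cprob m μ A ω) : ε ≤ μ.real A := by
  have hint := setIntegral_cprob (μ := μ) hm hA (MeasurableSet.univ (m := m))
  rw [Measure.restrict_univ, univ_inter] at hint
  calc ε = ∫ _, ε ∂μ := by simp
    _ ≤ ∫ ω, cprob m μ A ω ∂μ := integral_mono_ae (integrable_const ε) integrable_condExp h
    _ = μ.real A := hint

end Cprob

section CondIndep

variable {Ω α β : Type*} {m m0 : MeasurableSpace Ω} [MeasurableSpace α] [MeasurableSpace β]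
  {μ : Measure Ω} [IsFiniteMeasure μ] {S : Set Ω} {T : Ω → α} {B : Set α} {g : Ω → β}

lemma setIntegral_cprob_preimage_inter (hm : m ≤ m0) (hT : Measurable T)
    (hB : MeasurableSet B) (hg : Measurable g) (hind : CondIndepFunGiven m T g μ)
    (hS : MeasurableSet[m] S) {u : Set β} (hu : MeasurableSet u) :
    ∫ ω in g ⁻¹' u ∩ S, cprob m μ (T ⁻¹' B) ω ∂μ = μ.real (g ⁻¹' u ∩ (S ∩ T ⁻¹' B)) := by
  have hu₁ : Integrable ((g ⁻¹' u).indicator fun _ => (1 : ℝ)) μ :=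
    (integrable_const 1).indicator (hg hu)
  have hpu : Integrable (cprob m μ (T ⁻¹' B) * (g ⁻¹' u).indicator fun _ => 1) μ :=
    hu₁.bdd_mul (stronglyMeasurable_cprob.mono hm).aestronglyMeasurable ae_norm_cprob_le_one
  calc ∫ ω in g ⁻¹' u ∩ S, cprob m μ (T ⁻¹' B) ω ∂μ
      = ∫ ω in S, (cprob m μ (T ⁻¹' B) * (g ⁻¹' u).indicator fun _ => (1 : ℝ)) ω ∂μ := by
        rw [inter_comm, ← setIntegral_indicator (hg hu)]
        congr 1 with ω
        by_cases h : ω ∈ g ⁻¹' u <;> simp [h]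
    _ = ∫ ω in S, cprob m μ (T ⁻¹' B) ω * cprob m μ (g ⁻¹' u) ω ∂μ := by
        rw [← setIntegral_condExp hm hpu hS]
        exact setIntegral_congr_ae (hm _ hS) ((condExp_stronglyMeasurable_mul_of_bound hm
          stronglyMeasurable_cprob hu₁ 1 ae_norm_cprob_le_one).mono fun ω h _ => h)
    _ = μ.real (g ⁻¹' u ∩ (S ∩ T ⁻¹' B)) := by
        rw [← setIntegral_congr_ae (hm _ hS) ((hind B u hB hu).mono fun ω h _ => h),
          setIntegral_cprob hm ((hT hB).inter (hg hu)) hS]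
        congr 1
        ac_rfl

lemma map_restrict_inter_eq_map_withDensity_cprob (hm : m ≤ m0) (hT : Measurable T)
    (hB : MeasurableSet B) (hg : Measurable g) (hind : CondIndepFunGiven m T g μ)
    (hS : MeasurableSet[m] S) :
    (μ.restrict (S ∩ T ⁻¹' B)).map g
      = ((μ.restrict S).withDensity fun ω => ENNReal.ofReal (cprob m μ (T ⁻¹' B) ω)).map g := by
  ext u hu
  rw [Measure.map_apply hg hu, Measure.map_apply hg hu, Measure.restrict_apply (hg hu),
    withDensity_apply _ (hg hu), Measure.restrict_restrict (hg hu),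
    ← ofReal_integral_eq_lintegral_ofReal (f := cprob m μ (T ⁻¹' B))
      integrable_condExp.restrict (ae_restrict_of_ae cprob_nonneg),
    setIntegral_cprob_preimage_inter hm hT hB hg hind hS hu, measureReal_def,
    ENNReal.ofReal_toReal (measure_ne_top μ _)]

lemma setIntegral_indicator_mul_comp_eq (hm : m ≤ m0) (hT : Measurable T)
    (hB : MeasurableSet B) (hg : Measurable g) (hind : CondIndepFunGiven m T g μ)
    (hS : MeasurableSet[m] S) {f : β → ℝ} (hf : Measurable f) :
    ∫ ω in S, (T ⁻¹' B).indicator (fun _ => 1) ω * f (g ω) ∂μ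
      = ∫ ω in S, cprob m μ (T ⁻¹' B) ω * f (g ω) ∂μ := by
  calc ∫ ω in S, (T ⁻¹' B).indicator (fun _ => 1) ω * f (g ω) ∂μ
      = ∫ y, f y ∂(μ.restrict (S ∩ T ⁻¹' B)).map g := by
        rw [integral_map hg.aemeasurable hf.aestronglyMeasurable,
          ← setIntegral_indicator (hT hB)]
        congr 1 with ω
        by_cases h : ω ∈ T ⁻¹' B <;> simp [h]
    _ = ∫ y, f y ∂((μ.restrict S).withDensity
          fun ω => ENNReal.ofReal (cprob m μ (T ⁻¹' B) ω)).map g := by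
        rw [map_restrict_inter_eq_map_withDensity_cprob hm hT hB hg hind hS]
    _ = ∫ ω in S, cprob m μ (T ⁻¹' B) ω * f (g ω) ∂μ := by
        rw [integral_map hg.aemeasurable hf.aestronglyMeasurable,
          integral_withDensity_eq_integral_toReal_smul
            (stronglyMeasurable_cprob.mono hm).measurable.ennreal_ofReal
            (ae_of_all _ fun _ => ENNReal.ofReal_lt_top)]
        refine integral_congr_ae (ae_restrict_of_ae ?_)
        filter_upwards [cprob_nonneg] with ω hω
        rw [ENNReal.toReal_ofReal hω, smul_eq_mul]

theorem CondIndepFunGiven.condExp_indicator_mul_comp_ae_eq (hm : m ≤ m0) (hT : Measurable T)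
    (hB : MeasurableSet B) (hg : Measurable g) (hind : CondIndepFunGiven m T g μ)
    {f : β → ℝ} (hf : Measurable f) (hfg : Integrable (f ∘ g) μ) :
    μ[(T ⁻¹' B).indicator (fun _ => 1) * (f ∘ g) | m]
      =ᵐ[μ] cprob m μ (T ⁻¹' B) * μ[f ∘ g | m] := by
  have hp := stronglyMeasurable_cprob (m := m) (μ := μ) (A := T ⁻¹' B)
  have hpfg : Integrable (cprob m μ (T ⁻¹' B) * (f ∘ g)) μ :=
    hfg.bdd_mul (hp.mono hm).aestronglyMeasurable ae_norm_cprob_le_one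
  refine (ae_eq_condExp_of_forall_setIntegral_eq hm
    (hfg.bdd_mul (c := 1) (measurable_const.indicator (hT hB)).aestronglyMeasurable ?_)
    (fun S _ _ => (integrable_condExp.bdd_mul (hp.mono hm).aestronglyMeasurable
      ae_norm_cprob_le_one).integrableOn)
    (fun S hS _ => ?_) (hp.mul stronglyMeasurable_condExp).aestronglyMeasurable).symm
  · exact ae_of_all _ fun ω => by by_cases h : ω ∈ T ⁻¹' B <;> simp [h]
  · calc ∫ ω in S, cprob m μ (T ⁻¹' B) ω * μ[f ∘ g | m] ω ∂μ
        = ∫ ω in S, μ[cprob m μ (T ⁻¹' B) * (f ∘ g) | m] ω ∂μ :=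
          setIntegral_congr_ae (hm _ hS)
            ((condExp_mul_of_stronglyMeasurable_left hp hpfg hfg).mono fun ω h _ => h.symm)
      _ = ∫ ω in S, (T ⁻¹' B).indicator (fun _ => 1) ω * f (g ω) ∂μ := by
          rw [setIntegral_condExp hm hpfg hS]
          exact (setIntegral_indicator_mul_comp_eq hm hT hB hg hind hS hf).symm

end CondIndep

section AIPW

variable {Ω : Type*} {m m0 : MeasurableSpace Ω} {μ : Measure Ω} {A : Set Ω} {Z U V : Ω → ℝ}
  {ε : ℝ}

def aipwScore (A : Set Ω) (Y π τ : Ω → ℝ) (ω : Ω) : ℝ :=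
  A.indicator (fun _ => 1) ω * Y ω / π ω + (1 - A.indicator (fun _ => 1) ω / π ω) * τ ω

lemma aipwScore_eq_add :
    aipwScore A Z V U = U + V⁻¹ * (A.indicator (fun _ => 1) * (Z - U)) := by
  ext ω
  simp only [aipwScore, Pi.add_apply, Pi.mul_apply, Pi.inv_apply, Pi.sub_apply]
  ring

lemma aipwScore_congr_ae {V' U' : Ω → ℝ} (hV : V =ᵐ[μ] V') (hU : U =ᵐ[μ] U') :
    aipwScore A Z V U =ᵐ[μ] aipwScore A Z V' U' := by
  filter_upwards [hV, hU] with ω h₁ h₂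
  simp [aipwScore, h₁, h₂]

lemma integrable_indicator_mul (hA : MeasurableSet A) (hZ : Integrable Z μ) :
    Integrable (fun ω => A.indicator (fun _ => 1) ω * Z ω) μ :=
  hZ.bdd_mul (c := 1) (measurable_const.indicator hA).aestronglyMeasurable
    (ae_of_all _ fun ω => by by_cases h : ω ∈ A <;> simp [h])

lemma MeasureTheory.Integrable.inv_mul_of_le {W : Ω → ℝ} (hW : Integrable W μ)
    (hV : Measurable V) (hε : 0 < ε) (hVε : ∀ ω, ε ≤ V ω) :
    Integrable (fun ω => (V ω)⁻¹ * W ω) μ := by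
  refine hW.bdd_mul (c := ε⁻¹) hV.inv.aestronglyMeasurable (ae_of_all _ fun ω => ?_)
  rw [norm_inv, Real.norm_of_nonneg (hε.le.trans (hVε ω))]
  exact inv_anti₀ hε (hVε ω)

lemma integrable_aipwScore (hA : MeasurableSet A) (hZ : Integrable Z μ) (hU : Integrable U μ)
    (hV : Measurable V) (hε : 0 < ε) (hVε : ∀ ω, ε ≤ V ω) :
    Integrable (aipwScore A Z V U) μ := by
  rw [aipwScore_eq_add]
  exact hU.add ((integrable_indicator_mul hA (hZ.sub hU)).inv_mul_of_le hV hε hVε)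

theorem integral_aipwScore_of_indepFun [IsProbabilityMeasure μ] {α : Type*} [MeasurableSpace α]
    {T : Ω → α} {B : Set α} (hT : Measurable T) (hB : MeasurableSet B) (hZ : Integrable Z μ)
    (hU : Integrable U μ) (hind : IndepFun T (Z - U) μ) (hc : μ.real (T ⁻¹' B) ≠ 0) :
    ∫ ω, aipwScore (T ⁻¹' B) Z (fun _ => μ.real (T ⁻¹' B)) U ω ∂μ = ∫ ω, Z ω ∂μ := by
  set c := μ.real (T ⁻¹' B)
  have hA := hT hB
  have hI : Measurable (B.indicator fun _ => (1 : ℝ)) := measurable_const.indicator hB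
  have hprod : ∫ ω, (T ⁻¹' B).indicator (fun _ => 1) ω * (Z ω - U ω) ∂μ
      = c * ∫ ω, Z ω - U ω ∂μ :=
    ((hind.comp hI measurable_id).integral_mul_eq_mul_integral
      (hI.comp hT).aestronglyMeasurable (hZ.sub hU).aestronglyMeasurable).trans
      (congrArg (· * _) (integral_indicator_one hA))
  calc ∫ ω, aipwScore (T ⁻¹' B) Z (fun _ => c) U ω ∂μ
      = ∫ ω, U ω + c⁻¹ * ((T ⁻¹' B).indicator (fun _ => 1) ω * (Z ω - U ω)) ∂μ := by
        rw [aipwScore_eq_add]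
        rfl
    _ = ∫ ω, U ω ∂μ + ∫ ω, Z ω - U ω ∂μ := by
        rw [integral_add hU ((integrable_indicator_mul (Z := fun ω => Z ω - U ω) hA
            (hZ.sub hU)).const_mul _), integral_const_mul, hprod, inv_mul_cancel_left₀ hc]
    _ = ∫ ω, Z ω ∂μ := by
        rw [integral_sub hZ hU]
        ring

theorem condExp_aipwScore_ae_eq [IsFiniteMeasure μ] (hm : m ≤ m0) (hA : MeasurableSet A)
    (hZ : Integrable Z μ) (hU : StronglyMeasurable[m] U) (hUi : Integrable U μ)
    (hV : StronglyMeasurable[m] V) (hε : 0 < ε) (hVε : ∀ ω, ε ≤ V ω)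
    (hfact : μ[A.indicator (fun _ => 1) * Z | m] =ᵐ[μ] cprob m μ A * μ[Z | m])
    (hrob : V =ᵐ[μ] cprob m μ A ∨ U =ᵐ[μ] μ[Z | m]) :
    μ[aipwScore A Z V U | m] =ᵐ[μ] μ[Z | m] := by
  set I : Ω → ℝ := A.indicator fun _ => 1
  have hIZ : Integrable (I * Z) μ := integrable_indicator_mul hA hZ
  have hIU : Integrable (I * U) μ := integrable_indicator_mul hA hUi
  have hW : Integrable (I * (Z - U)) μ := integrable_indicator_mul hA (hZ.sub hUi)
  have hV' : StronglyMeasurable[m] V⁻¹ := hV.measurable.inv.stronglyMeasurable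
  have hVW : Integrable (V⁻¹ * (I * (Z - U))) μ :=
    hW.inv_mul_of_le (hV.mono hm).measurable hε hVε
  have hresid : μ[I * (Z - U) | m] =ᵐ[μ] cprob m μ A * (μ[Z | m] - U) := by
    rw [mul_sub]
    filter_upwards [condExp_sub hIZ hIU m, hfact, condExp_mul_of_stronglyMeasurable_right hU hIU
      ((integrable_const 1).indicator hA)] with ω h₁ h₂ h₃
    simp only [Pi.sub_apply, Pi.mul_apply] at h₁ h₂ h₃ ⊢
    rw [h₁, h₂, h₃, cprob, cexp]
    ring
  have hrob' : ∀ᵐ ω ∂μ, V ω = cprob m μ A ω ∨ U ω = μ[Z | m] ω :=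
    hrob.elim (fun h => h.mono fun _ => Or.inl) (fun h => h.mono fun _ => Or.inr)
  rw [aipwScore_eq_add]
  filter_upwards [condExp_add hUi hVW m, condExp_mul_of_stronglyMeasurable_left hV' hVW hW,
    hresid, hrob'] with ω h₁ h₂ h₃ h₄
  simp only [Pi.add_apply, Pi.mul_apply, Pi.sub_apply, Pi.inv_apply] at h₁ h₂ h₃ ⊢
  rw [h₁, condExp_of_stronglyMeasurable hm hU hUi, h₂, h₃]
  rcases h₄ with h | h
  · rw [← h, inv_mul_cancel_left₀ (hε.trans_le (hVε ω)).ne']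
    ring
  · rw [h]
    ring

theorem integral_aipwScore_of_condExp_mul [IsFiniteMeasure μ] (hm : m ≤ m0)
    (hA : MeasurableSet A) (hZ : Integrable Z μ) (hU : StronglyMeasurable[m] U)
    (hUi : Integrable U μ) (hV : StronglyMeasurable[m] V) (hε : 0 < ε) (hVε : ∀ ω, ε ≤ V ω)
    (hfact : μ[A.indicator (fun _ => 1) * Z | m] =ᵐ[μ] cprob m μ A * μ[Z | m])
    (hrob : V =ᵐ[μ] cprob m μ A ∨ U =ᵐ[μ] μ[Z | m]) :
    ∫ ω, aipwScore A Z V U ω ∂μ = ∫ ω, Z ω ∂μ := by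
  rw [← integral_condExp hm, integral_congr_ae
    (condExp_aipwScore_ae_eq hm hA hZ hU hUi hV hε hVε hfact hrob), integral_condExp hm]

end AIPW

section Arms

variable {Ω : Type*} {m0 : MeasurableSpace Ω} {μ : Measure Ω} {s : Set Ω} {R F G f₁ f₀ : Ω → ℝ}

lemma MeasureTheory.Integrable.cond (hF : Integrable F μ) (s : Set Ω) : Integrable F μ[|s] := by
  by_cases hs : μ s = 0
  · simp [cond_eq_zero_of_meas_eq_zero hs]
  · exact hF.restrict.smul_measure (ENNReal.inv_ne_top.2 hs)

lemma measureReal_mul_integral_cond [IsFiniteMeasure μ] (F : Ω → ℝ) (s : Set Ω) :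
    μ.real s * ∫ ω, F ω ∂μ[|s] = ∫ ω in s, F ω ∂μ := by
  by_cases h0 : μ s = 0
  · simp [Measure.restrict_eq_zero.2 h0, cond_eq_zero_of_meas_eq_zero h0]
  · rw [ProbabilityTheory.cond, integral_smul_measure, ENNReal.toReal_inv, smul_eq_mul,
      ← mul_assoc, measureReal_def,
      mul_inv_cancel₀ (ENNReal.toReal_ne_zero.2 ⟨h0, measure_ne_top μ s⟩), one_mul]

lemma integral_eq_of_integral_cond_eq [IsFiniteMeasure μ] (hs : MeasurableSet s)
    (hF : Integrable F μ) (hG : Integrable G μ)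
    (h₁ : ∫ ω, F ω ∂μ[|s] = ∫ ω, G ω ∂μ[|s]) (h₂ : ∫ ω, F ω ∂μ[|sᶜ] = ∫ ω, G ω ∂μ[|sᶜ]) :
    ∫ ω, F ω ∂μ = ∫ ω, G ω ∂μ := by
  rw [← integral_add_compl hs hF, ← integral_add_compl hs hG,
    ← measureReal_mul_integral_cond F, ← measureReal_mul_integral_cond F,
    ← measureReal_mul_integral_cond G, ← measureReal_mul_integral_cond G, h₁, h₂]

-- `π̃(R, X) = byArm R (fun _ => π_{t1}) π†(X)` and `τ̃(R, X) = byArm R τ†₁(X) τ†₀(X)`.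
def byArm (R f₁ f₀ : Ω → ℝ) (ω : Ω) : ℝ :=
  R ω * f₁ ω + (1 - R ω) * f₀ ω

lemma byArm_ae_eq_cond_one (hR : Measurable R) : byArm R f₁ f₀ =ᵐ[μ[|{ω | R ω = 1}]] f₁ :=
  (ae_cond_mem (hR (measurableSet_singleton 1))).mono fun ω (h : R ω = 1) => by simp [byArm, h]

lemma byArm_ae_eq_cond_zero (hR : Measurable R) : byArm R f₁ f₀ =ᵐ[μ[|{ω | R ω = 0}]] f₀ :=
  (ae_cond_mem (hR (measurableSet_singleton 0))).mono fun ω (h : R ω = 0) => by simp [byArm, h]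

lemma le_byArm {ε : ℝ} (hR : ∀ ω, R ω = 0 ∨ R ω = 1) (h₁ : ∀ ω, ε ≤ f₁ ω)
    (h₀ : ∀ ω, ε ≤ f₀ ω) (ω : Ω) : ε ≤ byArm R f₁ f₀ ω := by
  rcases hR ω with h | h <;> simp [byArm, h, h₁, h₀]

lemma measurable_byArm (hR : Measurable R) (h₁ : Measurable f₁) (h₀ : Measurable f₀) :
    Measurable (byArm R f₁ f₀) := by
  unfold byArm
  fun_prop

lemma integrable_byArm (hR : Measurable R) (hRbin : ∀ ω, R ω = 0 ∨ R ω = 1)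
    (h₁ : Integrable f₁ μ) (h₀ : Integrable f₀ μ) : Integrable (byArm R f₁ f₀) μ := by
  have hR₁ : ∀ ω, ‖R ω‖ ≤ 1 := fun ω => by rcases hRbin ω with h | h <;> simp [h]
  have hR₀ : ∀ ω, ‖1 - R ω‖ ≤ 1 := fun ω => by rcases hRbin ω with h | h <;> simp [h]
  exact (h₁.bdd_mul hR.aestronglyMeasurable (ae_of_all _ hR₁)).add
    (h₀.bdd_mul (measurable_const.sub hR).aestronglyMeasurable (ae_of_all _ hR₀))

end Arms
theorem stmt3_general
    {Ω 𝒳 : Type*} [MeasurableSpace Ω] [MeasurableSpace 𝒳]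
    (P : Measure Ω) [IsProbabilityMeasure P]
    (X : Ω → 𝒳) (R T Y₁ Y₀ Y : Ω → ℝ) (Yt : ℝ → Ω → ℝ)
    (hX : Measurable X) (hR : Measurable R) (hT : Measurable T)
    (hY₁m : Measurable Y₁) (hY₀m : Measurable Y₀)
    (hRbin : ∀ ω, R ω = 0 ∨ R ω = 1)
    (hY₁2 : MemLp Y₁ 2 P) (hY₀2 : MemLp Y₀ 2 P)
    (hY : Y = fun ω => T ω * Y₁ ω + (1 - T ω) * Y₀ ω)
    (hYt1 : Yt 1 = Y₁) (hYt0 : Yt 0 = Y₀)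
    (ε : ℝ) (hε : 0 < ε)
    (hlam_pos : 0 < P {ω | R ω = 1})
    (hpi : ∀ r ∈ ({0, 1} : Set ℝ), ∀ t ∈ ({0, 1} : Set ℝ), ∀ᵐ ω ∂P,
      ε ≤ cprob (sigmaX X) (ProbabilityTheory.cond P {ω' | R ω' = r}) {ω' | T ω' = t} ω ∧
      cprob (sigmaX X) (ProbabilityTheory.cond P {ω' | R ω' = r}) {ω' | T ω' = t} ω ≤ 1 - ε)
    (hA1 : IndepFun T (fun ω => (Y₁ ω, Y₀ ω, X ω)) (ProbabilityTheory.cond P {ω | R ω = 1}))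
    (hA2 : CondIndepFunGiven (sigmaX X) T (fun ω => (Y₁ ω, Y₀ ω))
      (ProbabilityTheory.cond P {ω | R ω = 0}))
    (t : ℝ) (ht : t = 0 ∨ t = 1)
    (τd1 : 𝒳 → ℝ) (hτd1m : Measurable τd1) (hτd1b : ∃ C, ∀ x, |τd1 x| ≤ C)
    (πd : 𝒳 → ℝ) (hπdm : Measurable πd) (hπdr : ∀ x, πd x ∈ Set.Icc ε (1 - ε))
    (τd0 : 𝒳 → ℝ) (hτd0m : Measurable τd0) (hτd0b : ∃ C, ∀ x, |τd0 x| ≤ C)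
    (hrob : (fun ω => πd (X ω)) =ᵐ[P] cprob (sigmaX X) (ProbabilityTheory.cond P {ω' | R ω' = 0}) {ω' | T ω' = t} ∨
      (fun ω => τd0 (X ω)) =ᵐ[P] cexp (sigmaX X) (ProbabilityTheory.cond P {ω' | R ω' = 0}) (Yt t))
    :
    ∫ ω, ((if T ω = t then (1 : ℝ) else 0) * Y ω / (R ω * ((ProbabilityTheory.cond P {ω' | R ω' = 1}) {ω' | T ω' = t}).toReal + (1 - R ω) * πd (X ω))
      + (1 - (if T ω = t then (1 : ℝ) else 0) / (R ω * ((ProbabilityTheory.cond P {ω' | R ω' = 1}) {ω' | T ω' = t}).toReal + (1 - R ω) * πd (X ω))) * (R ω * τd1 (X ω) + (1 - R ω) * τd0 (X ω))) ∂P = (∫ ω', Yt t ω' ∂P) := by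
  set μ₁ := P[|{ω | R ω = 1}]
  set A := {ω | T ω = t}
  set c := μ₁.real A
  have hσ : sigmaX X ≤ ‹MeasurableSpace Ω› := measurable_iff_comap_le.1 hX
  have hA : MeasurableSet A := hT (measurableSet_singleton t)
  have : IsProbabilityMeasure μ₁ := cond_isProbabilityMeasure hlam_pos.ne'
  have hc : ε ≤ c := le_measureReal_of_ae_le_cprob hσ hA <| cond_absolutelyContinuous.ae_le <|
    (hpi 1 (by simp) t (by rcases ht with rfl | rfl <;> simp)).mono fun _ h => h.1
  obtain ⟨f, hf, hZf, hZ⟩ : ∃ f : ℝ × ℝ → ℝ, Measurable f ∧ Yt t = (fun ω => f (Y₁ ω, Y₀ ω)) ∧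
      Integrable (Yt t) P := by
    rcases ht with rfl | rfl
    · exact ⟨Prod.snd, measurable_snd, hYt0, hYt0 ▸ hY₀2.integrable one_le_two⟩
    · exact ⟨Prod.fst, measurable_fst, hYt1, hYt1 ▸ hY₁2.integrable one_le_two⟩
  obtain ⟨C₁, hC₁⟩ := hτd1b
  obtain ⟨C₀, hC₀⟩ := hτd0b
  have hτ₁ : Integrable (τd1 ∘ X) P :=
    .of_bound (hτd1m.comp hX).aestronglyMeasurable C₁ (ae_of_all _ fun ω => hC₁ (X ω))
  have hτ₀ : Integrable (τd0 ∘ X) P :=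
    .of_bound (hτd0m.comp hX).aestronglyMeasurable C₀ (ae_of_all _ fun ω => hC₀ (X ω))
  set D := byArm R (fun _ => c) (πd ∘ X)
  set U := byArm R (τd1 ∘ X) (τd0 ∘ X)
  have htrial : ∫ ω, aipwScore A (Yt t) D U ω ∂μ₁ = ∫ ω, Yt t ω ∂μ₁ := by
    refine (integral_congr_ae (aipwScore_congr_ae (byArm_ae_eq_cond_one hR)
      (byArm_ae_eq_cond_one hR))).trans (integral_aipwScore_of_indepFun hT
      (measurableSet_singleton t) (hZ.cond _) (hτ₁.cond _) ?_ (hε.trans_le hc).ne')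
    rw [hZf]
    exact hA1.comp measurable_id
      (show Measurable fun p : ℝ × ℝ × 𝒳 => f (p.1, p.2.1) - τd1 p.2.2 by fun_prop)
  have hobs : ∫ ω, aipwScore A (Yt t) D U ω ∂P[|{ω | R ω = 0}]
      = ∫ ω, Yt t ω ∂P[|{ω | R ω = 0}] := by
    refine (integral_congr_ae (aipwScore_congr_ae (byArm_ae_eq_cond_zero hR)
      (byArm_ae_eq_cond_zero hR))).trans (integral_aipwScore_of_condExp_mul hσ hA (hZ.cond _)
      (hτd0m.comp (comap_measurable X)).stronglyMeasurable (hτ₀.cond _)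
      (hπdm.comp (comap_measurable X)).stronglyMeasurable hε (fun ω => (hπdr _).1) ?_
      (hrob.imp cond_absolutelyContinuous.ae_eq cond_absolutelyContinuous.ae_eq))
    have hZ₀ := hZ.cond {ω | R ω = 0}
    rw [hZf] at hZ₀ ⊢
    exact hA2.condExp_indicator_mul_comp_ae_eq hσ hT (measurableSet_singleton t)
      (hY₁m.prodMk hY₀m) hf hZ₀
  have hR₀ : {ω | R ω = 1}ᶜ = {ω | R ω = 0} := by
    ext ω
    rcases hRbin ω with h | h <;> simp [h]
  have hint : Integrable (aipwScore A (Yt t) D U) P :=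
    integrable_aipwScore hA hZ (integrable_byArm hR hRbin hτ₁ hτ₀)
      (measurable_byArm hR measurable_const (hπdm.comp hX)) hε
      (le_byArm hRbin (fun _ => hc) fun ω => (hπdr (X ω)).1)
  -- The integrand is `aipwScore A Y D U`, and `Y = Yt t` on `A` by consistency.
  refine (integral_congr_ae (ae_of_all _ fun ω => ?_)).trans (integral_eq_of_integral_cond_eq
    (hR (measurableSet_singleton 1)) hint hZ htrial (hR₀ ▸ hobs))
  by_cases h : T ω = t
  · rcases ht with rfl | rfl <;>
      simp [aipwScore, byArm, A, c, D, U, h, hY, hYt0, hYt1, measureReal_def]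
  · simp [aipwScore, byArm, A, c, D, U, h, measureReal_def]

theorem stmt3
    {Ω 𝒳 : Type*} [MeasurableSpace Ω] [MeasurableSpace 𝒳] [StandardBorelSpace 𝒳]
    (P : Measure Ω) [IsProbabilityMeasure P]
    (X : Ω → 𝒳) (R T Y₁ Y₀ Y : Ω → ℝ) (Yt : ℝ → Ω → ℝ)
    (hX : Measurable X) (hR : Measurable R) (hT : Measurable T)
    (hY₁m : Measurable Y₁) (hY₀m : Measurable Y₀)
    (hRbin : ∀ ω, R ω = 0 ∨ R ω = 1) (hTbin : ∀ ω, T ω = 0 ∨ T ω = 1)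
    (hY₁2 : MemLp Y₁ 2 P) (hY₀2 : MemLp Y₀ 2 P)
    (hY : Y = fun ω => T ω * Y₁ ω + (1 - T ω) * Y₀ ω)
    (hYt1 : Yt 1 = Y₁) (hYt0 : Yt 0 = Y₀)
    (ε : ℝ) (hε : 0 < ε)
    (hlam_pos : 0 < P {ω | R ω = 1}) (hlam_lt : P {ω | R ω = 1} < 1)
    (hlamX : ∀ᵐ ω ∂P, ε ≤ cprob (sigmaX X) P {ω' | R ω' = 1} ω ∧
      cprob (sigmaX X) P {ω' | R ω' = 1} ω ≤ 1 - ε)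
    (hpi : ∀ r ∈ ({0, 1} : Set ℝ), ∀ t ∈ ({0, 1} : Set ℝ), ∀ᵐ ω ∂P,
      ε ≤ cprob (sigmaX X) (ProbabilityTheory.cond P {ω' | R ω' = r}) {ω' | T ω' = t} ω ∧
      cprob (sigmaX X) (ProbabilityTheory.cond P {ω' | R ω' = r}) {ω' | T ω' = t} ω ≤ 1 - ε)
    (hA1 : IndepFun T (fun ω => (Y₁ ω, Y₀ ω, X ω)) (ProbabilityTheory.cond P {ω | R ω = 1}))
    (hA2 : CondIndepFunGiven (sigmaX X) T (fun ω => (Y₁ ω, Y₀ ω))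
      (ProbabilityTheory.cond P {ω | R ω = 0}))
    (t : ℝ) (ht : t = 0 ∨ t = 1)
    (τd1 : 𝒳 → ℝ) (hτd1m : Measurable τd1) (hτd1b : ∃ C, ∀ x, |τd1 x| ≤ C)
    (πd : 𝒳 → ℝ) (hπdm : Measurable πd) (hπdr : ∀ x, πd x ∈ Set.Icc ε (1 - ε))
    (τd0 : 𝒳 → ℝ) (hτd0m : Measurable τd0) (hτd0b : ∃ C, ∀ x, |τd0 x| ≤ C)
    (hrob : (fun ω => πd (X ω)) =ᵐ[P] cprob (sigmaX X) (ProbabilityTheory.cond P {ω' | R ω' = 0}) {ω' | T ω' = t} ∨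
      (fun ω => τd0 (X ω)) =ᵐ[P] cexp (sigmaX X) (ProbabilityTheory.cond P {ω' | R ω' = 0}) (Yt t))
    :
    ∫ ω, ((if T ω = t then (1 : ℝ) else 0) * Y ω / (R ω * ((ProbabilityTheory.cond P {ω' | R ω' = 1}) {ω' | T ω' = t}).toReal + (1 - R ω) * πd (X ω))
      + (1 - (if T ω = t then (1 : ℝ) else 0) / (R ω * ((ProbabilityTheory.cond P {ω' | R ω' = 1}) {ω' | T ω' = t}).toReal + (1 - R ω) * πd (X ω))) * (R ω * τd1 (X ω) + (1 - R ω) * τd0 (X ω))) ∂P = (∫ ω', Yt t ω' ∂P) :=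
  stmt3_general P X R T Y₁ Y₀ Y Yt hX hR hT hY₁m hY₀m hRbin hY₁2 hY₀2 hY hYt1 hYt0 ε hε hlam_pos hpi
    hA1 hA2 t ht τd1 hτd1m hτd1b πd hπdm hπdr τd0 hτd0m hτd0b hrob
end
end

section
/- Assume (A1) and (A3). Then for each t ∈ {0,1}, the efficient influence function for μ_t under these assumptions has mean zero: E[ R·1{T=t}·Y / (λ₁(X)·π_{t1}) + (1 − R·1{T=t} / (λ₁(X)·π_{t1}))·τ_t(1,X) − μ_t ] = 0. -/
open MeasureTheory ProbabilityTheory Set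

noncomputable section

/-! Write the influence function as `w W + τ - w τ - E[W]`, where `W = Y_t`, `τ = τ_t(1, X)` and
`w = R 1{T = t} / (λ₁(X) π_{t1})` is the inverse-probability weight. Since `T` is independent of
`(Y₁, Y₀, X)` given `R = 1` (A1), `E[w h] = E[R h / λ₁(X)]` for every function `h` of
`(Y₁, Y₀, X)`. Both for `h = τ`, a function of `X`, and for `h = W`, by (A3), one has
`E[R h | X] = λ₁(X) E[h | X]`, whence `E[R h / λ₁(X)] = E[h]`. So `E[w W] = E[W]` and
`E[w τ] = E[τ]`, and everything cancels. -/

section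

variable {Ω : Type*} {m mΩ : MeasurableSpace Ω} {P : Measure Ω} {ε : ℝ} {s : Set Ω}

theorem cprob_nonneg_s6 (s : Set Ω) : ∀ᵐ ω ∂P, 0 ≤ cprob m P s ω :=
  condExp_nonneg (ae_of_all _ fun ω => Set.indicator_nonneg (fun _ _ => zero_le_one) ω)

theorem abs_cprob_le_one (s : Set Ω) : ∀ᵐ ω ∂P, |cprob m P s ω| ≤ 1 := by
  have h : ∀ᵐ ω ∂P, |s.indicator (fun _ => (1 : ℝ)) ω| ≤ 1 :=
    ae_of_all _ fun ω => by by_cases hω : ω ∈ s <;> simp [hω]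
  exact ae_bdd_abs_condExp_of_ae_bdd_abs h

theorem setIntegral_cprob_s6 [IsFiniteMeasure P] (hm : m ≤ mΩ) (hs : MeasurableSet s) {A : Set Ω}
    (hA : MeasurableSet[m] A) : ∫ ω in A, cprob m P s ω ∂P = P.real (A ∩ s) := by
  rw [cprob, cexp, setIntegral_condExp hm ((integrable_const 1).indicator hs) hA,
    setIntegral_indicator hs, setIntegral_const, smul_eq_mul, mul_one]

theorem integral_cprob [IsFiniteMeasure P] (hm : m ≤ mΩ) (hs : MeasurableSet s) :
    ∫ ω, cprob m P s ω ∂P = P.real s := by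
  rw [cprob, cexp, integral_condExp hm, integral_indicator hs, setIntegral_const, smul_eq_mul,
    mul_one]

theorem le_measureReal_of_le_cprob [IsProbabilityMeasure P] (hm : m ≤ mΩ) (hs : MeasurableSet s)
    (h : ∀ᵐ ω ∂P, ε ≤ cprob m P s ω) : ε ≤ P.real s := by
  calc ε = ∫ _, ε ∂P := by simp
    _ ≤ ∫ ω, cprob m P s ω ∂P := integral_mono_ae (integrable_const ε) integrable_condExp h
    _ = P.real s := integral_cprob hm hs

theorem trim_le_smul_restrict_trim [IsFiniteMeasure P] (hm : m ≤ mΩ) (hε : 0 < ε)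
    (hs : MeasurableSet s) (hcprob : ∀ᵐ ω ∂P, ε ≤ cprob m P s ω) :
    P.trim hm ≤ ENNReal.ofReal ε⁻¹ • (P.restrict s).trim hm := by
  refine Measure.le_iff.2 fun A hA => ?_
  have hreal : ε * P.real A ≤ P.real (A ∩ s) := by
    calc ε * P.real A = ∫ _ in A, ε ∂P := by simp [mul_comm]
      _ ≤ ∫ ω in A, cprob m P s ω ∂P :=
          setIntegral_mono_ae (integrable_const ε).integrableOn integrable_condExp.integrableOn
            hcprob
      _ = P.real (A ∩ s) := setIntegral_cprob_s6 hm hs hA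
  rw [trim_measurableSet_eq hm hA, Measure.smul_apply, trim_measurableSet_eq hm hA,
    Measure.restrict_apply (hm A hA), smul_eq_mul, ← ofReal_measureReal, ← ofReal_measureReal,
    ← ENNReal.ofReal_mul (inv_nonneg.2 hε.le)]
  exact ENNReal.ofReal_le_ofReal ((le_inv_mul_iff₀ hε).2 hreal)

theorem MeasureTheory.Integrable.of_cond_of_stronglyMeasurable [IsFiniteMeasure P] (hm : m ≤ mΩ)
    (hε : 0 < ε) (hs : MeasurableSet s) (hcprob : ∀ᵐ ω ∂P, ε ≤ cprob m P s ω) {f : Ω → ℝ}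
    (hf : StronglyMeasurable[m] f) (hfi : Integrable f P[|s]) : Integrable f P := by
  have hrestrict : Integrable f (P.restrict s) := by
    refine hfi.of_measure_le_smul (c := P s) (measure_ne_top P s) ?_
    by_cases h0 : P s = 0
    · simp only [Measure.restrict_eq_zero.2 h0, Measure.zero_le]
    · rw [ProbabilityTheory.cond, smul_smul, ENNReal.mul_inv_cancel h0 (measure_ne_top P s),
        one_smul]
  exact integrable_of_integrable_trim hm <|
    (hrestrict.trim hm hf).of_measure_le_smul ENNReal.ofReal_ne_top
      (trim_le_smul_restrict_trim hm hε hs hcprob)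

theorem integral_div_eq_of_condExp_eq_mul [IsFiniteMeasure P] (hm : m ≤ mΩ) (hε : 0 < ε)
    {lam g h : Ω → ℝ} (hlam : StronglyMeasurable[m] lam) (hlam_ge : ∀ᵐ ω ∂P, ε ≤ lam ω)
    (hh : Integrable h P) (hfac : P[h|m] =ᵐ[P] lam * P[g|m]) :
    ∫ ω, h ω / lam ω ∂P = ∫ ω, g ω ∂P := by
  have hinv_meas : StronglyMeasurable[m] lam⁻¹ := hlam.measurable.inv.stronglyMeasurable
  have hinv_bdd : ∀ᵐ ω ∂P, ‖lam⁻¹ ω‖ ≤ ε⁻¹ := by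
    filter_upwards [hlam_ge] with ω hω
    rw [Pi.inv_apply, norm_inv, Real.norm_of_nonneg (hε.le.trans hω)]
    exact inv_anti₀ hε hω
  have hint : Integrable (lam⁻¹ * h) P :=
    hh.bdd_mul (hinv_meas.mono hm).aestronglyMeasurable hinv_bdd
  calc ∫ ω, h ω / lam ω ∂P = ∫ ω, (P[lam⁻¹ * h|m]) ω ∂P := by
        rw [integral_condExp hm]; simp_rw [div_eq_inv_mul]; rfl
    _ = ∫ ω, (P[g|m]) ω ∂P := by
        refine integral_congr_ae ?_
        filter_upwards [condExp_mul_of_stronglyMeasurable_left hinv_meas hint hh, hfac,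
          hlam_ge] with ω h_pull h_fac hω
        rw [h_pull, Pi.mul_apply, h_fac, Pi.mul_apply, Pi.inv_apply,
          inv_mul_cancel_left₀ (hε.trans_le hω).ne']
    _ = ∫ ω, g ω ∂P := integral_condExp hm

theorem condExp_indicator_eq_cprob_mul [IsFiniteMeasure P] (hm : m ≤ mΩ)
    (hs : MeasurableSet s) {g : Ω → ℝ} (hg : StronglyMeasurable[m] g) (hgi : Integrable g P) :
    P[s.indicator g|m] =ᵐ[P] cprob m P s * P[g|m] := by
  have hprod : s.indicator g = g * s.indicator (fun _ => (1 : ℝ)) := by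
    ext ω; by_cases hω : ω ∈ s <;> simp [hω]
  rw [hprod, condExp_of_stronglyMeasurable hm hg hgi, mul_comm (cprob m P s)]
  exact condExp_mul_of_stronglyMeasurable_left hg (hprod ▸ hgi.indicator hs)
    ((integrable_const 1).indicator hs)

section CondIndep

variable {β γ : Type*} [MeasurableSpace β] [MeasurableSpace γ] {R : Ω → β} {Z : Ω → γ}
  {B : Set β} {A : Set Ω} [IsFiniteMeasure P]

theorem setIntegral_cprob_preimage (hm : m ≤ mΩ) (hci : CondIndepFunGiven m R Z P)
    (hR : Measurable R) (hZ : Measurable Z) (hB : MeasurableSet B) (hA : MeasurableSet[m] A)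
    {u : Set γ} (hu : MeasurableSet u) :
    ∫ ω in Z ⁻¹' u ∩ A, cprob m P (R ⁻¹' B) ω ∂P = P.real (Z ⁻¹' u ∩ (A ∩ R ⁻¹' B)) := by
  set lam := cprob m P (R ⁻¹' B)
  have hZu : MeasurableSet (Z ⁻¹' u) := hZ hu
  have hJ : Integrable ((Z ⁻¹' u).indicator fun _ => (1 : ℝ)) P :=
    (integrable_const 1).indicator hZu
  have hlamJ : lam * (Z ⁻¹' u).indicator (fun _ => 1) = (Z ⁻¹' u).indicator lam := by
    ext ω; by_cases hω : ω ∈ Z ⁻¹' u <;> simp [hω]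
  have hlamJ_int : Integrable (lam * (Z ⁻¹' u).indicator fun _ => 1) P :=
    hlamJ ▸ integrable_condExp.indicator hZu
  have hpull := condExp_mul_of_stronglyMeasurable_left stronglyMeasurable_condExp hlamJ_int hJ
  calc ∫ ω in Z ⁻¹' u ∩ A, lam ω ∂P
        = ∫ ω in A, (P[lam * (Z ⁻¹' u).indicator (fun _ => 1)|m]) ω ∂P := by
        rw [setIntegral_condExp hm hlamJ_int hA, hlamJ, setIntegral_indicator hZu, inter_comm]
    _ = ∫ ω in A, cprob m P (R ⁻¹' B ∩ Z ⁻¹' u) ω ∂P :=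
        integral_congr_ae (ae_restrict_of_ae (hpull.trans (hci B u hB hu).symm))
    _ = P.real (Z ⁻¹' u ∩ (A ∩ R ⁻¹' B)) := by
        rw [setIntegral_cprob_s6 hm ((hR hB).inter hZu) hA, ← inter_assoc, inter_comm]

-- `CondIndepFunGiven` only factorizes events; comparing laws of `Z` extends it to functions of `Z`.
theorem map_withDensity_cprob_eq (hm : m ≤ mΩ) (hci : CondIndepFunGiven m R Z P)
    (hR : Measurable R) (hZ : Measurable Z) (hB : MeasurableSet B) (hA : MeasurableSet[m] A) :
    ((P.restrict A).withDensity fun ω => ENNReal.ofReal (cprob m P (R ⁻¹' B) ω)).map Z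
      = (P.restrict (A ∩ R ⁻¹' B)).map Z := by
  ext u hu
  rw [Measure.map_apply hZ hu, Measure.map_apply hZ hu, withDensity_apply _ (hZ hu),
    Measure.restrict_restrict (hZ hu), Measure.restrict_apply (hZ hu),
    ← ofReal_integral_eq_lintegral_ofReal (f := cprob m P (R ⁻¹' B)) integrable_condExp.integrableOn
      (ae_restrict_of_ae (cprob_nonneg_s6 _)),
    setIntegral_cprob_preimage hm hci hR hZ hB hA hu, ofReal_measureReal]

theorem setIntegral_cprob_mul_comp (hm : m ≤ mΩ) (hci : CondIndepFunGiven m R Z P)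
    (hR : Measurable R) (hZ : Measurable Z) (hB : MeasurableSet B) (hA : MeasurableSet[m] A)
    {ψ : γ → ℝ} (hψ : Measurable ψ) :
    ∫ ω in A, cprob m P (R ⁻¹' B) ω * ψ (Z ω) ∂P
      = ∫ ω in A, (R ⁻¹' B).indicator (fun ω => ψ (Z ω)) ω ∂P := by
  have hdens : Measurable fun ω => ENNReal.ofReal (cprob m P (R ⁻¹' B) ω) :=
    ENNReal.measurable_ofReal.comp (stronglyMeasurable_condExp.measurable.mono hm le_rfl)
  calc ∫ ω in A, cprob m P (R ⁻¹' B) ω * ψ (Z ω) ∂P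
        = ∫ ω, ψ (Z ω) ∂(P.restrict A).withDensity
            fun ω => ENNReal.ofReal (cprob m P (R ⁻¹' B) ω) := by
        rw [integral_withDensity_eq_integral_toReal_smul hdens
          (ae_of_all _ fun _ => ENNReal.ofReal_lt_top)]
        refine integral_congr_ae ?_
        filter_upwards [ae_restrict_of_ae (cprob_nonneg_s6 (m := m) (P := P) (R ⁻¹' B))] with ω hω
        rw [ENNReal.toReal_ofReal hω, smul_eq_mul]
    _ = ∫ ω, ψ (Z ω) ∂P.restrict (A ∩ R ⁻¹' B) := by
        rw [← integral_map hZ.aemeasurable hψ.aestronglyMeasurable,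
          map_withDensity_cprob_eq hm hci hR hZ hB hA,
          integral_map hZ.aemeasurable hψ.aestronglyMeasurable]
    _ = ∫ ω in A, (R ⁻¹' B).indicator (fun ω => ψ (Z ω)) ω ∂P :=
        (setIntegral_indicator (hR hB)).symm

theorem condExp_indicator_comp_eq_cprob_mul (hm : m ≤ mΩ) (hci : CondIndepFunGiven m R Z P)
    (hR : Measurable R) (hZ : Measurable Z) (hB : MeasurableSet B) {ψ : γ → ℝ}
    (hψ : Measurable ψ) (hψi : Integrable (fun ω => ψ (Z ω)) P) :
    P[(R ⁻¹' B).indicator (fun ω => ψ (Z ω))|m]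
      =ᵐ[P] cprob m P (R ⁻¹' B) * P[fun ω => ψ (Z ω)|m] := by
  set lam := cprob m P (R ⁻¹' B)
  have hlam_meas : StronglyMeasurable[m] lam := stronglyMeasurable_condExp
  have hlam_bdd : ∀ᵐ ω ∂P, ‖lam ω‖ ≤ 1 := abs_cprob_le_one _
  have hlamψ : Integrable (lam * fun ω => ψ (Z ω)) P :=
    hψi.bdd_mul (hlam_meas.mono hm).aestronglyMeasurable hlam_bdd
  refine (ae_eq_condExp_of_forall_setIntegral_eq hm (hψi.indicator (hR hB))
    (fun _ _ _ => (integrable_condExp.bdd_mul (hlam_meas.mono hm).aestronglyMeasurable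
      hlam_bdd).integrableOn) (fun A hA _ => ?_)
    (hlam_meas.mul stronglyMeasurable_condExp).aestronglyMeasurable).symm
  calc ∫ ω in A, (lam * P[fun ω => ψ (Z ω)|m]) ω ∂P
        = ∫ ω in A, (P[lam * fun ω => ψ (Z ω)|m]) ω ∂P :=
        integral_congr_ae (ae_restrict_of_ae
          (condExp_mul_of_stronglyMeasurable_left hlam_meas hlamψ hψi).symm)
    _ = ∫ ω in A, (R ⁻¹' B).indicator (fun ω => ψ (Z ω)) ω ∂P := by
        rw [setIntegral_condExp hm hlamψ hA]
        exact setIntegral_cprob_mul_comp hm hci hR hZ hB hA hψ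

end CondIndep

section Indep

variable {δ γ : Type*} [MeasurableSpace δ] [MeasurableSpace γ]

theorem ProbabilityTheory.IndepFun.of_measurable_comap {μ : Measure Ω} {T : Ω → δ} {V : Ω → γ}
    {h : Ω → ℝ} (hTV : IndepFun T V μ) (hh : Measurable[MeasurableSpace.comap V inferInstance] h) :
    IndepFun T h μ := by
  rw [IndepFun_iff_Indep] at hTV ⊢
  exact indep_of_indep_of_le_right hTV hh.comap_le

theorem integral_indicator_eq_measureReal_mul_integral_cond [IsFiniteMeasure P]
    (hs : MeasurableSet s) (f : Ω → ℝ) :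
    ∫ ω, s.indicator f ω ∂P = P.real s * ∫ ω, f ω ∂P[|s] := by
  rw [integral_indicator hs, ProbabilityTheory.cond, integral_smul_measure, smul_eq_mul,
    ← mul_assoc, ENNReal.toReal_inv, ← measureReal_def]
  by_cases h0 : P s = 0
  · simp [Measure.restrict_eq_zero.2 h0]
  · rw [mul_inv_cancel₀ ((measureReal_ne_zero_iff).2 h0), one_mul]

theorem integral_indicator_ite_mul_eq_of_indepFun [IsFiniteMeasure P] [DecidableEq δ]
    [MeasurableSingletonClass δ] (hs : MeasurableSet s) {T : Ω → δ} (hT : Measurable T) (t : δ)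
    {g : Ω → ℝ} (hg : AEStronglyMeasurable g P[|s]) (hind : IndepFun T g P[|s]) :
    ∫ ω, s.indicator (fun ω => (if T ω = t then (1 : ℝ) else 0) * g ω) ω ∂P
      = P[|s].real {ω | T ω = t} * ∫ ω, s.indicator g ω ∂P := by
  have hφ : Measurable fun x : δ => if x = t then (1 : ℝ) else 0 :=
    measurable_const.ite (measurableSet_singleton t) measurable_const
  have hmul := (hind.comp hφ measurable_id).integral_fun_mul_eq_mul_integral
    (hφ.comp hT).aestronglyMeasurable hg
  have hmean : ∫ ω, (if T ω = t then (1 : ℝ) else 0) ∂P[|s] = P[|s].real {ω | T ω = t} := by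
    rw [← integral_indicator_one (s := {ω | T ω = t}) (hT (measurableSet_singleton t))]
    congr 1 with ω
    by_cases h : T ω = t <;> simp [h]
  simp only [Function.comp_def, id] at hmul
  rw [integral_indicator_eq_measureReal_mul_integral_cond hs,
    integral_indicator_eq_measureReal_mul_integral_cond hs, hmul, hmean]
  ring

variable {R T : Ω → ℝ} {t : ℝ}

theorem integral_ipw_mul_eq [IsFiniteMeasure P] (hR : Measurable R) (hT : Measurable T)
    (hRbin : ∀ ω, R ω = 0 ∨ R ω = 1) (hpos : P[|{ω | R ω = 1}].real {ω | T ω = t} ≠ 0)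
    {lam h : Ω → ℝ} (hg : AEStronglyMeasurable (fun ω => h ω / lam ω) P[|{ω | R ω = 1}])
    (hind : IndepFun T (fun ω => h ω / lam ω) P[|{ω | R ω = 1}]) :
    ∫ ω, R ω * (if T ω = t then (1 : ℝ) else 0)
        / (lam ω * (P[|{ω | R ω = 1}] {ω | T ω = t}).toReal) * h ω ∂P
      = ∫ ω, {ω | R ω = 1}.indicator h ω / lam ω ∂P := by
  set s1 := {ω | R ω = 1}
  have hs1 : MeasurableSet s1 := hR (measurableSet_singleton 1)
  have hweight : ∀ ω, R ω * (if T ω = t then (1 : ℝ) else 0)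
        / (lam ω * P[|s1].real {ω | T ω = t}) * h ω
      = s1.indicator (fun ω => (if T ω = t then (1 : ℝ) else 0) * (h ω / lam ω)) ω
        / P[|s1].real {ω | T ω = t} := by
    intro ω
    rcases hRbin ω with hR0 | hR1
    · simp [s1, hR0]
    · simp only [s1, hR1, Set.indicator_of_mem (show ω ∈ s1 from hR1)]
      ring
  simp_rw [← measureReal_def, hweight]
  rw [integral_div, integral_indicator_ite_mul_eq_of_indepFun hs1 hT t hg hind,
    mul_div_cancel_left₀ _ hpos]
  congr 1 with ω
  by_cases hω : ω ∈ s1 <;> simp [hω]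

theorem integrable_ipw_mul (hR : Measurable R) (hT : Measurable T)
    (hRbin : ∀ ω, R ω = 0 ∨ R ω = 1) {lam h : Ω → ℝ} {c : ℝ} (hε : 0 < ε) (hc : 0 < c)
    (hlam : Measurable lam) (hlam_ge : ∀ᵐ ω ∂P, ε ≤ lam ω) (hh : Integrable h P) :
    Integrable (fun ω => R ω * (if T ω = t then (1 : ℝ) else 0) / (lam ω * c) * h ω) P := by
  have hA_meas : Measurable fun ω => R ω * (if T ω = t then (1 : ℝ) else 0) :=
    hR.mul ((measurable_const.ite (measurableSet_singleton t) measurable_const :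
      Measurable fun x : ℝ => if x = t then (1 : ℝ) else 0).comp hT)
  refine hh.bdd_mul (c := (ε * c)⁻¹) (hA_meas.div (hlam.mul_const c)).aestronglyMeasurable ?_
  filter_upwards [hlam_ge] with ω hω
  have hA : |R ω * (if T ω = t then (1 : ℝ) else 0)| ≤ 1 := by
    rcases hRbin ω with h | h <;> split_ifs <;> simp [h]
  rw [Real.norm_eq_abs, abs_div, abs_of_pos (mul_pos (hε.trans_le hω) hc), inv_eq_one_div]
  exact div_le_div₀ zero_le_one hA (mul_pos hε hc) (by gcongr)

end Indep

theorem integral_aipw_eq_zero [IsProbabilityMeasure P] {w W τ : Ω → ℝ} (hτ : Integrable τ P)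
    (hwW : Integrable (fun ω => w ω * W ω) P) (hwτ : Integrable (fun ω => w ω * τ ω) P)
    (hW_eq : ∫ ω, w ω * W ω ∂P = ∫ ω, W ω ∂P) (hτ_eq : ∫ ω, w ω * τ ω ∂P = ∫ ω, τ ω ∂P) :
    ∫ ω, (w ω * W ω + τ ω - w ω * τ ω - ∫ ω', W ω' ∂P) ∂P = 0 := by
  have hsum : Integrable (fun ω => w ω * W ω + τ ω) P := hwW.add hτ
  have hdiff : Integrable (fun ω => w ω * W ω + τ ω - w ω * τ ω) P := hsum.sub hwτ
  rw [integral_sub hdiff (integrable_const _), integral_sub hsum hwτ, integral_add hwW hτ,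
    integral_const, probReal_univ, one_smul, hW_eq, hτ_eq]
  ring

end

theorem integral_eif_eq_zero {Ω 𝒳 β γ : Type*} [MeasurableSpace Ω] [MeasurableSpace 𝒳]
    [MeasurableSpace β] [MeasurableSpace γ] {P : Measure Ω} [IsProbabilityMeasure P]
    {X : Ω → 𝒳} {R T Y : Ω → ℝ} {Z : Ω → β} {V : Ω → γ} {ψ : β → ℝ} {t ε : ℝ}
    (hX : Measurable X) (hR : Measurable R) (hT : Measurable T) (hZ : Measurable Z)
    (hV : Measurable V) (hψ : Measurable ψ) (hψZ : Integrable (fun ω => ψ (Z ω)) P)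
    (hRbin : ∀ ω, R ω = 0 ∨ R ω = 1) (hcons : ∀ ω, R ω = 1 → T ω = t → Y ω = ψ (Z ω))
    (hε : 0 < ε) (hlam_ge : ∀ᵐ ω ∂P, ε ≤ cprob (sigmaX X) P {ω | R ω = 1} ω)
    (hpi_ge : ∀ᵐ ω ∂P, ε ≤ cprob (sigmaX X) P[|{ω | R ω = 1}] {ω | T ω = t} ω)
    (hXV : sigmaX X ≤ MeasurableSpace.comap V inferInstance)
    (hZV : Measurable[MeasurableSpace.comap V inferInstance] Z)
    (hA1 : IndepFun T V P[|{ω | R ω = 1}]) (hA3 : CondIndepFunGiven (sigmaX X) R Z P) :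
    ∫ ω, (R ω * (if T ω = t then (1 : ℝ) else 0) * Y ω
          / (cprob (sigmaX X) P {ω' | R ω' = 1} ω * (P[|{ω' | R ω' = 1}] {ω' | T ω' = t}).toReal)
        + (1 - R ω * (if T ω = t then (1 : ℝ) else 0)
          / (cprob (sigmaX X) P {ω' | R ω' = 1} ω * (P[|{ω' | R ω' = 1}] {ω' | T ω' = t}).toReal))
          * cexp (sigmaX X) P[|{ω' | R ω' = 1}] (fun ω => ψ (Z ω)) ω
        - ∫ ω', ψ (Z ω') ∂P) ∂P = 0 := by
  set s1 := {ω | R ω = 1}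
  set lam := cprob (sigmaX X) P s1
  set prT := (P[|s1] {ω | T ω = t}).toReal
  set W := fun ω => ψ (Z ω)
  set tau := cexp (sigmaX X) P[|s1] W
  set w := fun ω => R ω * (if T ω = t then (1 : ℝ) else 0) / (lam ω * prT)
  have hm : sigmaX X ≤ _ := hX.comap_le
  have hs1 : MeasurableSet s1 := hR (measurableSet_singleton 1)
  have hlam_meas : StronglyMeasurable[sigmaX X] lam := stronglyMeasurable_condExp
  have htau_meas : StronglyMeasurable[sigmaX X] tau := stronglyMeasurable_condExp
  have htau_int : Integrable tau P :=
    integrable_condExp.of_cond_of_stronglyMeasurable hm hε hs1 hlam_ge htau_meas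
  have hP1 : IsProbabilityMeasure P[|s1] := cond_isProbabilityMeasure <|
    (measureReal_ne_zero_iff).1 (hε.trans_le (le_measureReal_of_le_cprob hm hs1 hlam_ge)).ne'
  have hprT_pos : 0 < prT := hε.trans_le <| le_measureReal_of_le_cprob hm
    (hT (measurableSet_singleton t)) (cond_absolutelyContinuous.ae_le hpi_ge)
  have hw_ipw : ∀ h : Ω → ℝ, Measurable[MeasurableSpace.comap V inferInstance] h →
      ∫ ω, w ω * h ω ∂P = ∫ ω, s1.indicator h ω / lam ω ∂P := fun h hh =>
    have hg := hh.div (hlam_meas.measurable.mono hXV le_rfl)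
    integral_ipw_mul_eq hR hT hRbin hprT_pos.ne' (hg.mono hV.comap_le le_rfl).aestronglyMeasurable
      (hA1.of_measurable_comap hg)
  have hw_int : ∀ h : Ω → ℝ, Integrable h P → Integrable (fun ω => w ω * h ω) P := fun _ hh =>
    integrable_ipw_mul hR hT hRbin hε hprT_pos (hlam_meas.measurable.mono hm le_rfl) hlam_ge hh
  have hW : ∫ ω, w ω * W ω ∂P = ∫ ω, W ω ∂P := by
    rw [hw_ipw W (hψ.comp hZV)]
    exact integral_div_eq_of_condExp_eq_mul hm hε hlam_meas hlam_ge (hψZ.indicator hs1)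
      (condExp_indicator_comp_eq_cprob_mul hm hA3 hR hZ (measurableSet_singleton 1) hψ hψZ)
  have htau : ∫ ω, w ω * tau ω ∂P = ∫ ω, tau ω ∂P := by
    rw [hw_ipw tau (htau_meas.measurable.mono hXV le_rfl)]
    exact integral_div_eq_of_condExp_eq_mul hm hε hlam_meas hlam_ge (htau_int.indicator hs1)
      (condExp_indicator_eq_cprob_mul hm hs1 htau_meas htau_int)
  have hAY : ∀ ω, R ω * (if T ω = t then (1 : ℝ) else 0) * Y ω
      = R ω * (if T ω = t then (1 : ℝ) else 0) * W ω := fun ω => by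
    by_cases hRω : R ω = 1 <;> by_cases hTω : T ω = t
    · rw [hcons ω hRω hTω]
    all_goals simp [(hRbin ω).resolve_right, *]
  calc _ = ∫ ω, (w ω * W ω + tau ω - w ω * tau ω - ∫ ω', W ω' ∂P) ∂P :=
        integral_congr_ae (ae_of_all _ fun ω => by simp only [hAY, w]; ring)
    _ = 0 := integral_aipw_eq_zero htau_int (hw_int W hψZ) (hw_int tau htau_int) hW htau

theorem stmt6_general
    {Ω 𝒳 : Type*} [MeasurableSpace Ω] [MeasurableSpace 𝒳]
    (P : Measure Ω) [IsProbabilityMeasure P]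
    (X : Ω → 𝒳) (R T Y₁ Y₀ Y : Ω → ℝ) (Yt : ℝ → Ω → ℝ)
    (hX : Measurable X) (hR : Measurable R) (hT : Measurable T)
    (hY₁m : Measurable Y₁) (hY₀m : Measurable Y₀)
    (hRbin : ∀ ω, R ω = 0 ∨ R ω = 1)
    (hY₁2 : MemLp Y₁ 2 P) (hY₀2 : MemLp Y₀ 2 P)
    (hY : Y = fun ω => T ω * Y₁ ω + (1 - T ω) * Y₀ ω)
    (hYt1 : Yt 1 = Y₁) (hYt0 : Yt 0 = Y₀)
    (ε : ℝ) (hε : 0 < ε)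
    (hlamX : ∀ᵐ ω ∂P, ε ≤ cprob (sigmaX X) P {ω' | R ω' = 1} ω ∧
      cprob (sigmaX X) P {ω' | R ω' = 1} ω ≤ 1 - ε)
    (hpi : ∀ r ∈ ({0, 1} : Set ℝ), ∀ t ∈ ({0, 1} : Set ℝ), ∀ᵐ ω ∂P,
      ε ≤ cprob (sigmaX X) (ProbabilityTheory.cond P {ω' | R ω' = r}) {ω' | T ω' = t} ω ∧
      cprob (sigmaX X) (ProbabilityTheory.cond P {ω' | R ω' = r}) {ω' | T ω' = t} ω ≤ 1 - ε)
    (hA1 : IndepFun T (fun ω => (Y₁ ω, Y₀ ω, X ω)) (ProbabilityTheory.cond P {ω | R ω = 1}))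
    (hA3 : CondIndepFunGiven (sigmaX X) R (fun ω => (Y₁ ω, Y₀ ω)) P)
    :
    ∀ t ∈ ({0, 1} : Set ℝ),
      ∫ ω, (R ω * (if T ω = t then (1 : ℝ) else 0) * Y ω / (cprob (sigmaX X) P {ω' | R ω' = 1} ω * ((ProbabilityTheory.cond P {ω' | R ω' = 1}) {ω' | T ω' = t}).toReal)
        + (1 - R ω * (if T ω = t then (1 : ℝ) else 0) / (cprob (sigmaX X) P {ω' | R ω' = 1} ω * ((ProbabilityTheory.cond P {ω' | R ω' = 1}) {ω' | T ω' = t}).toReal)) * cexp (sigmaX X) (ProbabilityTheory.cond P {ω' | R ω' = 1}) (Yt t) ω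
        - (∫ ω', Yt t ω' ∂P)) ∂P = 0 := by
  intro t ht
  have hpi_ge := (hpi 1 (by simp) t ht).mono fun _ h => h.1
  have hlam_ge := hlamX.mono fun _ h => h.1
  have hZ : Measurable fun ω => (Y₁ ω, Y₀ ω) := hY₁m.prodMk hY₀m
  have hV : Measurable fun ω => (Y₁ ω, Y₀ ω, X ω) := hY₁m.prodMk (hY₀m.prodMk hX)
  have hXV : sigmaX X ≤ MeasurableSpace.comap (fun ω => (Y₁ ω, Y₀ ω, X ω)) inferInstance :=
    Measurable.comap_le (f := X)
      ((measurable_snd.comp measurable_snd).comp (comap_measurable _))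
  have hZV : Measurable[MeasurableSpace.comap (fun ω => (Y₁ ω, Y₀ ω, X ω)) inferInstance]
      fun ω => (Y₁ ω, Y₀ ω) :=
    (measurable_fst.prodMk (measurable_fst.comp measurable_snd)).comp (comap_measurable _)
  rcases ht with rfl | rfl
  · rw [hYt0]
    exact integral_eif_eq_zero (ψ := Prod.snd) hX hR hT hZ hV measurable_snd
      (hY₀2.integrable one_le_two) hRbin (fun ω _ hTω => by simp [hY, hTω]) hε hlam_ge hpi_ge
      hXV hZV hA1 hA3
  · rw [hYt1]
    exact integral_eif_eq_zero (ψ := Prod.fst) hX hR hT hZ hV measurable_fst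
      (hY₁2.integrable one_le_two) hRbin (fun ω _ hTω => by simp [hY, hTω]) hε hlam_ge hpi_ge
      hXV hZV hA1 hA3

theorem stmt6
    {Ω 𝒳 : Type*} [MeasurableSpace Ω] [MeasurableSpace 𝒳] [StandardBorelSpace 𝒳]
    (P : Measure Ω) [IsProbabilityMeasure P]
    (X : Ω → 𝒳) (R T Y₁ Y₀ Y : Ω → ℝ) (Yt : ℝ → Ω → ℝ)
    (hX : Measurable X) (hR : Measurable R) (hT : Measurable T)
    (hY₁m : Measurable Y₁) (hY₀m : Measurable Y₀)
    (hRbin : ∀ ω, R ω = 0 ∨ R ω = 1) (hTbin : ∀ ω, T ω = 0 ∨ T ω = 1)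
    (hY₁2 : MemLp Y₁ 2 P) (hY₀2 : MemLp Y₀ 2 P)
    (hY : Y = fun ω => T ω * Y₁ ω + (1 - T ω) * Y₀ ω)
    (hYt1 : Yt 1 = Y₁) (hYt0 : Yt 0 = Y₀)
    (ε : ℝ) (hε : 0 < ε)
    (hlam_pos : 0 < P {ω | R ω = 1}) (hlam_lt : P {ω | R ω = 1} < 1)
    (hlamX : ∀ᵐ ω ∂P, ε ≤ cprob (sigmaX X) P {ω' | R ω' = 1} ω ∧
      cprob (sigmaX X) P {ω' | R ω' = 1} ω ≤ 1 - ε)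
    (hpi : ∀ r ∈ ({0, 1} : Set ℝ), ∀ t ∈ ({0, 1} : Set ℝ), ∀ᵐ ω ∂P,
      ε ≤ cprob (sigmaX X) (ProbabilityTheory.cond P {ω' | R ω' = r}) {ω' | T ω' = t} ω ∧
      cprob (sigmaX X) (ProbabilityTheory.cond P {ω' | R ω' = r}) {ω' | T ω' = t} ω ≤ 1 - ε)
    (hA1 : IndepFun T (fun ω => (Y₁ ω, Y₀ ω, X ω)) (ProbabilityTheory.cond P {ω | R ω = 1}))
    (hA3 : CondIndepFunGiven (sigmaX X) R (fun ω => (Y₁ ω, Y₀ ω)) P)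
    :
    ∀ t ∈ ({0, 1} : Set ℝ),
      ∫ ω, (R ω * (if T ω = t then (1 : ℝ) else 0) * Y ω / (cprob (sigmaX X) P {ω' | R ω' = 1} ω * ((ProbabilityTheory.cond P {ω' | R ω' = 1}) {ω' | T ω' = t}).toReal)
        + (1 - R ω * (if T ω = t then (1 : ℝ) else 0) / (cprob (sigmaX X) P {ω' | R ω' = 1} ω * ((ProbabilityTheory.cond P {ω' | R ω' = 1}) {ω' | T ω' = t}).toReal)) * cexp (sigmaX X) (ProbabilityTheory.cond P {ω' | R ω' = 1}) (Yt t) ω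
        - (∫ ω', Yt t ω' ∂P)) ∂P = 0 :=
  stmt6_general P X R T Y₁ Y₀ Y Yt hX hR hT hY₁m hY₀m hRbin hY₁2 hY₀2 hY hYt1 hYt0 ε hε hlamX hpi
    hA1 hA3
end
end
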